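/- (Proposition 8.2) For every n ≥ 2, the set of crossing 2-Brauer relations of rank 2n is finite and its cardinality equals ∑_{i=1}^{n−1} ∑_{j=i+1}^{n} M(j−i−1)·M(n+i−j−1), where M denotes the Motzkin numbers. -/
import Mathlib


/-- The Motzkin numbers: `M 0 = 1`, `M 1 = 1` and, for `n ≥ 2`,
`M n = M (n-1) + ∑_{i=0}^{n-2} M i * M (n-2-i)`. -/
def motzkin : ℕ → ℕ
  | 0 => 1
  | 1 => 1
  | n + 2 =>
      motzkin (n + 1) +
        ∑ i ∈ (Finset.range (n + 1)).attach, motzkin i.1 * motzkin (n - i.1)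
decreasing_by
  all_goals
    first
      | omega
      | (have h := Finset.mem_range.mp i.2; omega)

/-- A crossing `2`-Brauer relation of rank `2n`: an involution `σ` of `ZMod (2n)`
which is symmetric with respect to rotation by `π` and has exactly one crossing
pair `(i,j)` with `val i < val j < val (σ i) < val (σ j)`. -/
def IsCrossTwoBrauer (n : ℕ) (σ : ZMod (2 * n) → ZMod (2 * n)) : Prop :=
  Function.Involutive σ ∧
    (∀ i : ZMod (2 * n), σ (i + (n : ZMod (2 * n))) = σ i + (n : ZMod (2 * n))) ∧
    ∃! p : ZMod (2 * n) × ZMod (2 * n),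
      p.1.val < p.2.val ∧ p.2.val < (σ p.1).val ∧ (σ p.1).val < (σ p.2).val

/-- Noncrossing partial involution on `[0,m)`, extended by the identity. -/
def IsNC (m : ℕ) (τ : ℕ → ℕ) : Prop :=
  (∀ a, τ (τ a) = a) ∧ (∀ a, a < m → τ a < m) ∧ (∀ a, m ≤ a → τ a = a) ∧
    ∀ a b, a < b → b < τ a → τ a < τ b → False

abbrev NC (m : ℕ) := {τ : ℕ → ℕ // IsNC m τ}

lemma isNC_id (m : ℕ) : IsNC m id :=
  ⟨fun _ => rfl, fun _ h => h, fun _ _ => rfl, fun a _ h1 h2 _ => by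
    simp only [id] at h2; omega⟩

lemma NC.ext {m : ℕ} {τ τ' : NC m} (h : ∀ a, a < m → τ.1 a = τ'.1 a) : τ = τ' := by
  apply Subtype.ext; funext a
  by_cases ha : a < m
  · exact h a ha
  · rw [τ.2.2.2.1 a (le_of_not_gt ha), τ'.2.2.2.1 a (le_of_not_gt ha)]

instance NC.finite (m : ℕ) : Finite (NC m) := by
  apply Finite.of_injective (fun τ : NC m => (fun a : Fin m => (⟨τ.1 a, τ.2.2.1 a a.2⟩ : Fin m)))
  intro τ τ' h
  apply NC.ext
  intro a ha
  have := congrFun h ⟨a, ha⟩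
  exact congrArg Fin.val this

noncomputable instance NC.fintype (m : ℕ) : Fintype (NC m) := Fintype.ofFinite _

instance NC.unique0 : Unique (NC 0) where
  default := ⟨id, isNC_id 0⟩
  uniq τ := NC.ext (fun a ha => absurd ha (by omega))

instance NC.unique1 : Unique (NC 1) where
  default := ⟨id, isNC_id 1⟩
  uniq τ := NC.ext (fun a ha => by
    have h0 := τ.2.2.1 a ha
    show τ.1 a = a
    omega)

def glue0 (τ : ℕ → ℕ) : ℕ → ℕ := fun a => if a = 0 then 0 else τ (a - 1) + 1

def glue (k : ℕ) (τi τo : ℕ → ℕ) : ℕ → ℕ := fun a =>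
  if a = 0 then k + 1 else if a = k + 1 then 0
  else if a < k + 1 then τi (a - 1) + 1 else τo (a - k - 2) + k + 2

def slc (c d : ℕ) (τ : ℕ → ℕ) : ℕ → ℕ := fun a => if a < d then τ (a + c) - c else a

lemma slice_lt (c d : ℕ) (τ : ℕ → ℕ) (a : ℕ) (h : a < d) : slc c d τ a = τ (a + c) - c :=
  if_pos h

lemma slice_ge (c d : ℕ) (τ : ℕ → ℕ) (a : ℕ) (h : ¬ a < d) : slc c d τ a = a := if_neg h

lemma isNC_slice {τ : ℕ → ℕ} (c d : ℕ)
    (hi : ∀ a, c ≤ a → a < c + d → τ (τ a) = a)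
    (hx : ∀ a b, c ≤ a → a < c + d → c ≤ b → b < c + d →
      a < b → b < τ a → τ a < τ b → False)
    (hcl : ∀ a, c ≤ a → a < c + d → c ≤ τ a ∧ τ a < c + d) :
    IsNC d (slc c d τ) := by
  refine ⟨?_, ?_, ?_, ?_⟩
  · intro a
    by_cases h : a < d
    · have hc := hcl (a + c) (by omega) (by omega)
      have hinv := hi (a + c) (by omega) (by omega)
      rw [slice_lt c d τ a h, slice_lt c d τ (τ (a+c) - c) (by omega),
        show τ (a + c) - c + c = τ (a + c) by omega, hinv]
      omega
    · rw [slice_ge _ _ _ _ h, slice_ge _ _ _ _ h]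
  · intro a ha
    have hc := hcl (a + c) (by omega) (by omega)
    rw [slice_lt _ _ _ _ ha]
    omega
  · intro a ha
    rw [slice_ge _ _ _ _ (by omega)]
  · intro a b hab h1 h2
    by_cases h : a < d
    · have hca := hcl (a + c) (by omega) (by omega)
      rw [slice_lt _ _ _ _ h] at h1 h2
      by_cases h' : b < d
      · have hcb := hcl (b + c) (by omega) (by omega)
        rw [slice_lt _ _ _ _ h'] at h2
        exact hx (a + c) (b + c) (by omega) (by omega) (by omega) (by omega) (by omega)
          (by omega) (by omega)
      · rw [slice_ge _ _ _ _ h'] at h2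
        omega
    · rw [slice_ge _ _ _ _ h] at h1
      omega

lemma isNC_glue0 {m : ℕ} {τ : ℕ → ℕ} (h : IsNC (m + 1) τ) : IsNC (m + 2) (glue0 τ) := by
  obtain ⟨hi, hb, hs, hx⟩ := h
  refine ⟨?_, ?_, ?_, ?_⟩
  · intro a
    by_cases h0 : a = 0
    · simp [glue0, h0]
    · rw [show glue0 τ a = τ (a - 1) + 1 from if_neg h0,
        show glue0 τ (τ (a-1) + 1) = τ (τ (a-1) + 1 - 1) + 1 from if_neg (by omega),
        Nat.add_sub_cancel, hi]
      omega
  · intro a ha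
    by_cases h0 : a = 0
    · simp [glue0, h0]
    · rw [show glue0 τ a = τ (a - 1) + 1 from if_neg h0]
      have := hb (a - 1) (by omega)
      omega
  · intro a ha
    rw [show glue0 τ a = τ (a - 1) + 1 from if_neg (by omega), hs (a - 1) (by omega)]
    omega
  · intro a b hab h1 h2
    by_cases h0 : a = 0
    · rw [show glue0 τ a = 0 from by rw [h0]; rfl] at h1
      omega
    · rw [show glue0 τ a = τ (a - 1) + 1 from if_neg h0] at h1 h2
      rw [show glue0 τ b = τ (b - 1) + 1 from if_neg (by omega)] at h2
      exact hx (a - 1) (b - 1) (by omega) (by omega) (by omega)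

lemma isNC_glue {m k : ℕ} (hk : k ≤ m) {τi τo : ℕ → ℕ}
    (h1 : IsNC k τi) (h2 : IsNC (m - k) τo) : IsNC (m + 2) (glue k τi τo) := by
  obtain ⟨i1, b1, s1, x1⟩ := h1
  obtain ⟨i2, b2, s2, x2⟩ := h2
  have gval0 : glue k τi τo 0 = k + 1 := rfl
  have gvalk : glue k τi τo (k+1) = 0 := by simp [glue]
  have gvali : ∀ a, 0 < a → a < k + 1 → glue k τi τo a = τi (a-1) + 1 := by
    intro a h h'; simp only [glue, if_neg (by omega : a ≠ 0), if_neg (by omega : a ≠ k+1),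
      if_pos h']
  have gvalo : ∀ a, k + 1 < a → glue k τi τo a = τo (a-k-2) + k + 2 := by
    intro a h; simp only [glue, if_neg (by omega : a ≠ 0), if_neg (by omega : a ≠ k+1),
      if_neg (by omega : ¬ a < k+1)]
  refine ⟨?_, ?_, ?_, ?_⟩
  · intro a
    rcases Nat.lt_trichotomy a (k+1) with h | h | h
    · rcases Nat.eq_zero_or_pos a with h0 | h0
      · rw [h0, gval0, gvalk]
      · rw [gvali a h0 h]
        have hbi := b1 (a-1) (by omega)
        rw [gvali _ (by omega) (by omega)]
        simp only [Nat.add_sub_cancel, i1]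
        omega
    · rw [h, gvalk, gval0]
    · rw [gvalo a h, gvalo _ (by omega),
        show τo (a - k - 2) + k + 2 - k - 2 = τo (a - k - 2) by omega, i2]
      omega
  · intro a ha
    rcases Nat.lt_trichotomy a (k+1) with h | h | h
    · rcases Nat.eq_zero_or_pos a with h0 | h0
      · rw [h0, gval0]; omega
      · rw [gvali a h0 h]; have := b1 (a-1) (by omega); omega
    · rw [h, gvalk]; omega
    · rw [gvalo a h]; have := b2 (a-k-2) (by omega); omega
  · intro a ha
    rw [gvalo a (by omega), s2 (a-k-2) (by omega)]
    omega
  · intro a b hab hh1 hh2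
    rcases Nat.lt_trichotomy a (k+1) with h | h | h
    · rcases Nat.eq_zero_or_pos a with h0 | h0
      · rw [h0, gval0] at hh1 hh2
        have hb0 : 0 < b := by omega
        rw [gvali b hb0 hh1] at hh2
        have := b1 (b-1) (by omega)
        omega
      · rw [gvali a h0 h] at hh1 hh2
        have hba := b1 (a-1) (by omega)
        have hb0 : 0 < b := by omega
        have hbk : b < k + 1 := by omega
        rw [gvali b hb0 hbk] at hh2
        exact x1 (a-1) (b-1) (by omega) (by omega) (by omega)
    · rw [h, gvalk] at hh1; omega
    · rw [gvalo a h] at hh1 hh2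
      have hbk : k + 1 < b := by omega
      rw [gvalo b hbk] at hh2
      exact x2 (a-k-2) (b-k-2) (by omega) (by omega) (by omega)

def motzkinSum (m : ℕ) := NC (m+1) ⊕ (Σ k : Fin (m+1), NC k.1 × NC (m - k.1))

def glueFun (m : ℕ) : motzkinSum m → NC (m+2)
  | Sum.inl τ => ⟨glue0 τ.1, isNC_glue0 τ.2⟩
  | Sum.inr ⟨k, τi, τo⟩ => ⟨glue k τi.1 τo.1, isNC_glue (by omega) τi.2 τo.2⟩

lemma glueFun_bijective (m : ℕ) : Function.Bijective (glueFun m) := by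
  constructor
  · rintro (τ | ⟨k, τi, τo⟩) (τ' | ⟨k', τi', τo'⟩) h
    · apply congrArg Sum.inl
      apply NC.ext; intro a ha
      have := congrFun (congrArg Subtype.val h) (a+1)
      simp only [glueFun, glue0, if_neg (by omega : a + 1 ≠ 0), Nat.add_sub_cancel] at this
      omega
    · exfalso
      have := congrFun (congrArg Subtype.val h) 0
      simp only [glueFun, glue0, glue, if_true] at this
      omega
    · exfalso
      have := congrFun (congrArg Subtype.val h) 0
      simp only [glueFun, glue0, glue, if_true] at this
      omega
    · have hk : (k : ℕ) = (k' : ℕ) := by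
        have := congrFun (congrArg Subtype.val h) 0
        simp only [glueFun, glue, if_true] at this
        omega
      have hkk : k = k' := Fin.ext hk
      subst hkk
      apply congrArg Sum.inr
      have hti : τi = τi' := by
        apply NC.ext; intro a ha
        have := congrFun (congrArg Subtype.val h) (a+1)
        simp only [glueFun, glue, if_neg (by omega : a + 1 ≠ 0),
          if_neg (by omega : a + 1 ≠ (k:ℕ) + 1), if_pos (by omega : a + 1 < (k:ℕ) + 1),
          Nat.add_sub_cancel] at this
        omega
      have hto : τo = τo' := by
        apply NC.ext; intro a ha
        have := congrFun (congrArg Subtype.val h) (a + (k:ℕ) + 2)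
        simp only [glueFun, glue, if_neg (by omega : a + (k:ℕ) + 2 ≠ 0),
          if_neg (by omega : a + (k:ℕ) + 2 ≠ (k:ℕ) + 1),
          if_neg (by omega : ¬ a + (k:ℕ) + 2 < (k:ℕ) + 1)] at this
        rw [show a + (k:ℕ) + 2 - (k:ℕ) - 2 = a by omega] at this
        omega
      rw [hti, hto]
  · intro τ
    obtain ⟨i1, b1, s1, x1⟩ := τ.2
    by_cases h0 : τ.1 0 = 0
    · have hfix : ∀ a, 0 < a → 0 < τ.1 a := by
        intro a ha
        by_contra h
        have h3 : τ.1 a = 0 := by omega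
        have h2 := i1 a
        rw [h3, h0] at h2
        omega
      have hNC : IsNC (m+1) (slc 1 (m+1) τ.1) := by
        apply isNC_slice 1 (m+1) (fun a _ _ => i1 a)
          (fun a b _ _ _ _ hab hh1 hh2 => x1 a b hab hh1 hh2)
        intro a ha ham
        exact ⟨hfix a (by omega), by have := b1 a (by omega); omega⟩
      refine ⟨Sum.inl ⟨slc 1 (m+1) τ.1, hNC⟩, ?_⟩
      apply NC.ext
      intro a ha
      show glue0 (slc 1 (m+1) τ.1) a = τ.1 a
      by_cases h : a = 0
      · rw [show glue0 (slc 1 (m+1) τ.1) a = 0 from by rw [h]; rfl, h, h0]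
      · rw [show glue0 (slc 1 (m+1) τ.1) a = slc 1 (m+1) τ.1 (a-1) + 1 from if_neg h]
        by_cases h2 : a - 1 < m + 1
        · rw [slice_lt _ _ _ _ h2, show a - 1 + 1 = a by omega]
          have := hfix a (by omega)
          omega
        · rw [slice_ge _ _ _ _ h2, s1 a (by omega)]
          omega
    · have hb0 := b1 0 (by omega)
      set K := τ.1 0 - 1 with hK
      have hτ0 : τ.1 0 = K + 1 := by omega
      have hKm : K ≤ m := by omega
      have hτk1 : τ.1 (K+1) = 0 := by rw [← hτ0, i1]
      have c1 : ∀ a, 0 < a → a < K + 1 → 0 < τ.1 a ∧ τ.1 a < K + 1 := by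
        intro a ha hak
        have hne0 : τ.1 a ≠ 0 := by
          intro h
          have h2 := i1 a
          rw [h, hτ0] at h2
          omega
        have hnek : τ.1 a ≠ K + 1 := by
          intro h
          have h2 := i1 a
          rw [h, hτk1] at h2
          omega
        have hle : τ.1 a < K + 1 := by
          by_contra hc
          exact x1 0 a ha (by omega) (by omega)
        exact ⟨by omega, hle⟩
      have c2 : ∀ a, K + 1 < a → a < m + 2 → K + 1 < τ.1 a ∧ τ.1 a < m + 2 := by
        intro a ha ham
        have hbnd := b1 a ham
        have hne0 : τ.1 a ≠ 0 := by
          intro h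
          have h2 := i1 a
          rw [h, hτ0] at h2
          omega
        have hnek : τ.1 a ≠ K + 1 := by
          intro h
          have h2 := i1 a
          rw [h, hτk1] at h2
          omega
        refine ⟨?_, hbnd⟩
        by_contra hc
        refine x1 0 (τ.1 a) (by omega) (by omega) ?_
        rw [hτ0, i1]
        omega
      have hNCi : IsNC K (slc 1 K τ.1) := by
        apply isNC_slice 1 K (fun a _ _ => i1 a)
          (fun a b _ _ _ _ hab hh1 hh2 => x1 a b hab hh1 hh2)
        intro a ha ham
        have := c1 a (by omega) (by omega)
        omega
      have hNCo : IsNC (m - K) (slc (K+2) (m-K) τ.1) := by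
        apply isNC_slice (K+2) (m-K) (fun a _ _ => i1 a)
          (fun a b _ _ _ _ hab hh1 hh2 => x1 a b hab hh1 hh2)
        intro a ha ham
        have := c2 a (by omega) (by omega)
        omega
      refine ⟨Sum.inr ⟨⟨K, by omega⟩, ⟨slc 1 K τ.1, hNCi⟩, ⟨slc (K+2) (m-K) τ.1, hNCo⟩⟩, ?_⟩
      apply NC.ext
      intro a ha
      show glue K (slc 1 K τ.1) (slc (K+2) (m-K) τ.1) a = τ.1 a
      rcases Nat.lt_trichotomy a (K+1) with h | h | h
      · rcases Nat.eq_zero_or_pos a with hz | hz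
        · rw [hz, show glue K _ _ 0 = K + 1 from rfl, hτ0]
        · rw [show glue K (slc 1 K τ.1) (slc (K+2) (m-K) τ.1) a
              = slc 1 K τ.1 (a-1) + 1 from by
            simp only [glue, if_neg (by omega : a ≠ 0), if_neg (by omega : a ≠ K+1), if_pos h]]
          rw [slice_lt _ _ _ _ (by omega), show a - 1 + 1 = a by omega]
          have := c1 a hz h
          omega
      · rw [h, show glue K (slc 1 K τ.1) (slc (K+2) (m-K) τ.1) (K+1) = 0 from by
          simp [glue], hτk1]
      · rw [show glue K (slc 1 K τ.1) (slc (K+2) (m-K) τ.1) a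
            = slc (K+2) (m-K) τ.1 (a-K-2) + K + 2 from by
          simp only [glue, if_neg (by omega : a ≠ 0), if_neg (by omega : a ≠ K+1),
            if_neg (by omega : ¬ a < K + 1)]]
        rw [slice_lt _ _ _ _ (by omega), show a - K - 2 + (K+2) = a by omega]
        have := c2 a h ha
        omega

theorem card_NC (m : ℕ) : Nat.card (NC m) = motzkin m := by
  induction m using Nat.strong_induction_on with
  | _ m ih =>
    match m with
    | 0 => rw [Nat.card_unique]; rw [motzkin]
    | 1 => rw [Nat.card_unique]; rw [motzkin]
    | (m+2) =>
      rw [Nat.card_congr (Equiv.ofBijective _ (glueFun_bijective m)).symm]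
      show Nat.card (NC (m+1) ⊕ (Σ k : Fin (m+1), NC k.1 × NC (m - k.1))) = _
      rw [Nat.card_eq_fintype_card, Fintype.card_sum, Fintype.card_sigma]
      rw [motzkin]
      rw [Finset.sum_attach (Finset.range (m+1)) (fun i => motzkin i * motzkin (m - i))]
      rw [← Fin.sum_univ_eq_sum_range (fun i => motzkin i * motzkin (m - i)) (m+1)]
      congr 1
      · rw [← Nat.card_eq_fintype_card]
        exact ih (m+1) (by omega)
      · apply Finset.sum_congr rfl
        intro k _
        rw [Fintype.card_prod, ← Nat.card_eq_fintype_card, ← Nat.card_eq_fintype_card,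
          ih k.1 (by omega), ih (m - k.1) (by omega)]

/-! ### Part B: the construction -/

def wrap (M a : ℕ) : ℕ := if a < M then a else a - M

lemma wrap_lo {M a : ℕ} (h : a < M) : wrap M a = a := if_pos h
lemma wrap_hi {M a : ℕ} (h : ¬ a < M) : wrap M a = a - M := if_neg h

def FB (n i j : ℕ) (t1 t2 : ℕ → ℕ) (k : ℕ) : ℕ :=
  if k = i then i + n
  else if k = j then j + n
  else if k = i + n then i
  else if k = j + n then j
  else if k < i then wrap (2*n) (j + n + 1 + t2 (k + n - j - 1))
  else if k < j then i + 1 + t1 (k - i - 1)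
  else if k < i + n then j + 1 + t2 (k - j - 1)
  else if k < j + n then i + n + 1 + t1 (k - i - n - 1)
  else wrap (2*n) (j + n + 1 + t2 (k - n - j - 1))

structure BCtx (n i j : ℕ) (t1 t2 : ℕ → ℕ) : Prop where
  hn : 2 ≤ n
  hij : i < j
  hjn : j < n
  ht1 : IsNC (j - i - 1) t1
  ht2 : IsNC (n + i - j - 1) t2

namespace BCtx

variable {n i j : ℕ} {t1 t2 : ℕ → ℕ} (H : BCtx n i j t1 t2)
include H

omit H in
lemma val_i : FB n i j t1 t2 i = i + n := by rw [FB, if_pos rfl]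

lemma val_j : FB n i j t1 t2 j = j + n := by
  have := H.hij; rw [FB, if_neg (by omega), if_pos rfl]

lemma val_in : FB n i j t1 t2 (i + n) = i := by
  have h1 := H.hij; have h2 := H.hjn; have h3 := H.hn
  rw [FB, if_neg (by omega), if_neg (by omega), if_pos rfl]

lemma val_jn : FB n i j t1 t2 (j + n) = j := by
  have h1 := H.hij; have h2 := H.hjn; have h3 := H.hn
  rw [FB, if_neg (by omega), if_neg (by omega), if_neg (by omega), if_pos rfl]

lemma val_A1 {k : ℕ} (hk1 : i < k) (hk2 : k < j) :
    FB n i j t1 t2 k = i + 1 + t1 (k - i - 1) := by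
  have h1 := H.hij; have h2 := H.hjn; have h3 := H.hn
  rw [FB, if_neg (by omega), if_neg (by omega), if_neg (by omega), if_neg (by omega),
    if_neg (by omega), if_pos hk2]

lemma val_A2 {k : ℕ} (hk1 : j < k) (hk2 : k < i + n) :
    FB n i j t1 t2 k = j + 1 + t2 (k - j - 1) := by
  have h1 := H.hij; have h2 := H.hjn; have h3 := H.hn
  rw [FB, if_neg (by omega), if_neg (by omega), if_neg (by omega), if_neg (by omega),
    if_neg (by omega), if_neg (by omega), if_pos hk2]

lemma val_A3 {k : ℕ} (hk1 : i + n < k) (hk2 : k < j + n) :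
    FB n i j t1 t2 k = i + n + 1 + t1 (k - i - n - 1) := by
  have h1 := H.hij; have h2 := H.hjn; have h3 := H.hn
  rw [FB, if_neg (by omega), if_neg (by omega), if_neg (by omega), if_neg (by omega),
    if_neg (by omega), if_neg (by omega), if_neg (by omega), if_pos hk2]

lemma val_lo {k : ℕ} (hk : k < i) :
    FB n i j t1 t2 k = wrap (2*n) (j + n + 1 + t2 (k + n - j - 1)) := by
  have h1 := H.hij; have h2 := H.hjn; have h3 := H.hn
  rw [FB, if_neg (by omega), if_neg (by omega), if_neg (by omega), if_neg (by omega),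
    if_pos hk]

lemma val_hi {k : ℕ} (hk : j + n < k) :
    FB n i j t1 t2 k = wrap (2*n) (j + n + 1 + t2 (k - n - j - 1)) := by
  have h1 := H.hij; have h2 := H.hjn; have h3 := H.hn
  rw [FB, if_neg (by omega), if_neg (by omega), if_neg (by omega), if_neg (by omega),
    if_neg (by omega), if_neg (by omega), if_neg (by omega), if_neg (by omega)]

/-- bound for `t1` values -/
lemma bt1 {a : ℕ} (h : a < j - i - 1) : t1 a < j - i - 1 := H.ht1.2.1 a h
lemma bt2 {a : ℕ} (h : a < n + i - j - 1) : t2 a < n + i - j - 1 := H.ht2.2.1 a h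

lemma FB_lt {k : ℕ} (hk : k < 2*n) : FB n i j t1 t2 k < 2*n := by
  have h1 := H.hij; have h2 := H.hjn; have h3 := H.hn
  by_cases e1 : k = i; · rw [e1, val_i]; omega
  by_cases e2 : k = j; · rw [e2, H.val_j]; omega
  by_cases e3 : k = i + n; · rw [e3, H.val_in]; omega
  by_cases e4 : k = j + n; · rw [e4, H.val_jn]; omega
  by_cases c1 : k < i
  · rw [H.val_lo c1]
    have hb := H.bt2 (show k + n - j - 1 < n + i - j - 1 by omega)
    by_cases hw : j + n + 1 + t2 (k + n - j - 1) < 2*n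
    · rw [wrap_lo hw]; omega
    · rw [wrap_hi hw]; omega
  by_cases c2 : k < j
  · rw [H.val_A1 (by omega) c2]
    have hb := H.bt1 (show k - i - 1 < j - i - 1 by omega)
    omega
  by_cases c3 : k < i + n
  · rw [H.val_A2 (by omega) c3]
    have hb := H.bt2 (show k - j - 1 < n + i - j - 1 by omega)
    omega
  by_cases c4 : k < j + n
  · rw [H.val_A3 (by omega) c4]
    have hb := H.bt1 (show k - i - n - 1 < j - i - 1 by omega)
    omega
  · rw [H.val_hi (by omega)]
    have hb := H.bt2 (show k - n - j - 1 < n + i - j - 1 by omega)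
    by_cases hw : j + n + 1 + t2 (k - n - j - 1) < 2*n
    · rw [wrap_lo hw]; omega
    · rw [wrap_hi hw]; omega

lemma FB_invol {k : ℕ} (hk : k < 2*n) : FB n i j t1 t2 (FB n i j t1 t2 k) = k := by
  have h1 := H.hij; have h2 := H.hjn; have h3 := H.hn
  by_cases e1 : k = i; · rw [e1, val_i, H.val_in]
  by_cases e2 : k = j; · rw [e2, H.val_j, H.val_jn]
  by_cases e3 : k = i + n; · rw [e3, H.val_in, val_i]
  by_cases e4 : k = j + n; · rw [e4, H.val_jn, H.val_j]
  by_cases c1 : k < i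
  · rw [H.val_lo c1]
    have hm : k + n - j - 1 < n + i - j - 1 := by omega
    have hb := H.bt2 hm
    have hinv := H.ht2.1 (k + n - j - 1)
    by_cases hw : j + n + 1 + t2 (k + n - j - 1) < 2*n
    · rw [wrap_lo hw, H.val_hi (k := j + n + 1 + t2 (k + n - j - 1)) (by omega)]
      rw [show j + n + 1 + t2 (k + n - j - 1) - n - j - 1 = t2 (k + n - j - 1) by omega, hinv]
      rw [show j + n + 1 + (k + n - j - 1) = k + 2*n by omega, wrap_hi (by omega)]
      omega
    · rw [wrap_hi hw, H.val_lo (k := j + n + 1 + t2 (k + n - j - 1) - 2*n) (by omega)]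
      rw [show j + n + 1 + t2 (k + n - j - 1) - 2*n + n - j - 1 = t2 (k + n - j - 1) by omega,
        hinv, show j + n + 1 + (k + n - j - 1) = k + 2*n by omega, wrap_hi (by omega)]
      omega
  by_cases c2 : k < j
  · rw [H.val_A1 (by omega) c2]
    have hb := H.bt1 (show k - i - 1 < j - i - 1 by omega)
    rw [H.val_A1 (k := i + 1 + t1 (k - i - 1)) (by omega) (by omega),
      show i + 1 + t1 (k - i - 1) - i - 1 = t1 (k - i - 1) by omega, H.ht1.1]
    omega
  by_cases c3 : k < i + n
  · rw [H.val_A2 (by omega) c3]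
    have hb := H.bt2 (show k - j - 1 < n + i - j - 1 by omega)
    rw [H.val_A2 (k := j + 1 + t2 (k - j - 1)) (by omega) (by omega),
      show j + 1 + t2 (k - j - 1) - j - 1 = t2 (k - j - 1) by omega, H.ht2.1]
    omega
  by_cases c4 : k < j + n
  · rw [H.val_A3 (by omega) c4]
    have hb := H.bt1 (show k - i - n - 1 < j - i - 1 by omega)
    rw [H.val_A3 (k := i + n + 1 + t1 (k - i - n - 1)) (by omega) (by omega),
      show i + n + 1 + t1 (k - i - n - 1) - i - n - 1 = t1 (k - i - n - 1) by omega, H.ht1.1]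
    omega
  · rw [H.val_hi (k := k) (by omega)]
    have hm : k - n - j - 1 < n + i - j - 1 := by omega
    have hb := H.bt2 hm
    have hinv := H.ht2.1 (k - n - j - 1)
    by_cases hw : j + n + 1 + t2 (k - n - j - 1) < 2*n
    · rw [wrap_lo hw, H.val_hi (k := j + n + 1 + t2 (k - n - j - 1)) (by omega)]
      rw [show j + n + 1 + t2 (k - n - j - 1) - n - j - 1 = t2 (k - n - j - 1) by omega, hinv]
      rw [show j + n + 1 + (k - n - j - 1) = k by omega, wrap_lo (by omega)]
    · rw [wrap_hi hw, H.val_lo (k := j + n + 1 + t2 (k - n - j - 1) - 2*n) (by omega)]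
      rw [show j + n + 1 + t2 (k - n - j - 1) - 2*n + n - j - 1 = t2 (k - n - j - 1) by omega,
        hinv, show j + n + 1 + (k - n - j - 1) = k by omega, wrap_lo (by omega)]

lemma FB_symm {k : ℕ} (hk : k < 2*n) :
    FB n i j t1 t2 (wrap (2*n) (k + n)) = wrap (2*n) (FB n i j t1 t2 k + n) := by
  have h1 := H.hij; have h2 := H.hjn; have h3 := H.hn
  by_cases e1 : k = i
  · rw [e1, val_i, wrap_lo (by omega), H.val_in, wrap_hi (by omega)]; omega
  by_cases e2 : k = j
  · rw [e2, H.val_j, wrap_lo (by omega), H.val_jn, wrap_hi (by omega)]; omega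
  by_cases e3 : k = i + n
  · rw [e3, H.val_in, wrap_hi (by omega), show i + n + n - 2*n = i by omega, val_i,
      wrap_lo (by omega)]
  by_cases e4 : k = j + n
  · rw [e4, H.val_jn, wrap_hi (by omega), show j + n + n - 2*n = j by omega, H.val_j,
      wrap_lo (by omega)]
  by_cases c1 : k < i
  · have hm : k + n - j - 1 < n + i - j - 1 := by omega
    have hb := H.bt2 hm
    rw [wrap_lo (by omega : k + n < 2*n), H.val_A2 (k := k + n) (by omega) (by omega), H.val_lo c1]
    by_cases hw : j + n + 1 + t2 (k + n - j - 1) < 2*n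
    · rw [wrap_lo hw, wrap_hi (by omega)]; omega
    · rw [wrap_hi hw, wrap_lo (by omega)]; omega
  by_cases c2 : k < j
  · have hb := H.bt1 (show k - i - 1 < j - i - 1 by omega)
    rw [wrap_lo (by omega : k + n < 2*n), H.val_A3 (k := k + n) (by omega) (by omega),
      H.val_A1 (by omega) c2, wrap_lo (by omega),
      show k + n - i - n - 1 = k - i - 1 by omega]
    omega
  by_cases c3 : k < i + n
  · have hb := H.bt2 (show k - j - 1 < n + i - j - 1 by omega)
    rw [H.val_A2 (by omega) c3]
    by_cases hkn : k < n
    · rw [wrap_lo (by omega : k + n < 2*n), H.val_hi (k := k + n) (by omega),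
        show k + n - n - j - 1 = k - j - 1 by omega]
      by_cases hw : j + 1 + t2 (k - j - 1) + n < 2*n
      · rw [wrap_lo hw, wrap_lo (by omega)]
        omega
      · rw [wrap_hi hw, wrap_hi (by omega)]
        omega
    · rw [wrap_hi (by omega : ¬ k + n < 2*n), H.val_lo (k := k + n - 2*n) (by omega),
        show k + n - 2*n + n - j - 1 = k - j - 1 by omega]
      by_cases hw : j + 1 + t2 (k - j - 1) + n < 2*n
      · rw [wrap_lo hw, wrap_lo (by omega)]
        omega
      · rw [wrap_hi hw, wrap_hi (by omega)]
        omega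
  by_cases c4 : k < j + n
  · have hb := H.bt1 (show k - i - n - 1 < j - i - 1 by omega)
    rw [wrap_hi (by omega : ¬ k + n < 2*n), H.val_A1 (k := k + n - 2*n) (by omega) (by omega),
      H.val_A3 (by omega) c4, wrap_hi (by omega),
      show k + n - 2*n - i - 1 = k - i - n - 1 by omega]
    omega
  · have hm : k - n - j - 1 < n + i - j - 1 := by omega
    have hb := H.bt2 hm
    rw [wrap_hi (by omega : ¬ k + n < 2*n), H.val_A2 (k := k + n - 2*n) (by omega) (by omega),
      H.val_hi (by omega), show k + n - 2*n - j - 1 = k - n - j - 1 by omega]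
    by_cases hw : j + n + 1 + t2 (k - n - j - 1) < 2*n
    · rw [wrap_lo hw, wrap_hi (by omega)]; omega
    · rw [wrap_hi hw, wrap_lo (by omega)]; omega

lemma FB_unique {a b : ℕ} (ha : a < 2*n) (hb : b < 2*n) (hab : a < b)
    (h1 : b < FB n i j t1 t2 a) (h2 : FB n i j t1 t2 a < FB n i j t1 t2 b) :
    a = i ∧ b = j := by
  have hh1 := H.hij; have hh2 := H.hjn; have hh3 := H.hn
  by_cases ea1 : a = i
  · subst ea1
    rw [val_i] at h1 h2
    refine ⟨rfl, ?_⟩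
    by_cases eb : b = j
    · exact eb
    exfalso
    by_cases cb : b < j
    · rw [H.val_A1 (by omega) cb] at h2
      have := H.bt1 (show b - a - 1 < j - a - 1 by omega)
      omega
    · rw [H.val_A2 (by omega) (by omega)] at h2
      have := H.bt2 (show b - j - 1 < n + a - j - 1 by omega)
      omega
  by_cases ea2 : a = j
  · exfalso
    subst ea2
    rw [H.val_j] at h1 h2
    by_cases cb1 : b < i + n
    · rw [H.val_A2 (by omega) cb1] at h2
      have := H.bt2 (show b - a - 1 < n + i - a - 1 by omega)
      omega
    by_cases cb2 : b = i + n
    · rw [cb2, H.val_in] at h2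
      omega
    · rw [H.val_A3 (by omega) (by omega)] at h2
      have := H.bt1 (show b - i - n - 1 < a - i - 1 by omega)
      omega
  by_cases ea3 : a = i + n
  · exfalso
    rw [ea3, H.val_in] at h1
    omega
  by_cases ea4 : a = j + n
  · exfalso
    rw [ea4, H.val_jn] at h1
    omega
  by_cases ca1 : a < i
  · exfalso
    have hma : a + n - j - 1 < n + i - j - 1 := by omega
    have hba := H.bt2 hma
    rw [H.val_lo ca1] at h1 h2
    by_cases hw : j + n + 1 + t2 (a + n - j - 1) < 2*n
    · rw [wrap_lo hw] at h1 h2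
      by_cases cb1 : b < i
      · have hmb : b + n - j - 1 < n + i - j - 1 := by omega
        have hbb := H.bt2 hmb
        rw [H.val_lo cb1] at h2
        by_cases hw2 : j + n + 1 + t2 (b + n - j - 1) < 2*n
        · rw [wrap_lo hw2] at h2
          refine H.ht2.2.2.2 (t2 (a + n - j - 1)) (t2 (b + n - j - 1)) (by omega) ?_ ?_
          · rw [H.ht2.1]
            omega
          · rw [H.ht2.1, H.ht2.1]
            omega
        · rw [wrap_hi hw2] at h2
          omega
      by_cases cb2 : b = i
      · rw [cb2, val_i] at h2
        omega
      by_cases cb3 : b < j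
      · rw [H.val_A1 (by omega) cb3] at h2
        have := H.bt1 (show b - i - 1 < j - i - 1 by omega)
        omega
      by_cases cb4 : b = j
      · rw [cb4, H.val_j] at h2
        omega
      by_cases cb5 : b < i + n
      · rw [H.val_A2 (by omega) cb5] at h2
        have := H.bt2 (show b - j - 1 < n + i - j - 1 by omega)
        omega
      by_cases cb6 : b = i + n
      · rw [cb6, H.val_in] at h2
        omega
      by_cases cb7 : b < j + n
      · rw [H.val_A3 (by omega) cb7] at h2
        have := H.bt1 (show b - i - n - 1 < j - i - 1 by omega)
        omega
      by_cases cb8 : b = j + n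
      · rw [cb8, H.val_jn] at h2
        omega
      · have hmb : b - n - j - 1 < n + i - j - 1 := by omega
        have hbb := H.bt2 hmb
        rw [H.val_hi (k := b) (by omega)] at h2
        by_cases hw2 : j + n + 1 + t2 (b - n - j - 1) < 2*n
        · rw [wrap_lo hw2] at h2
          refine H.ht2.2.2.2 (b - n - j - 1) (t2 (a + n - j - 1)) (by omega) (by omega) ?_
          rw [H.ht2.1]
          omega
        · rw [wrap_hi hw2] at h2
          omega
    · rw [wrap_hi hw] at h1 h2
      have cb1 : b < i := by omega
      have hmb : b + n - j - 1 < n + i - j - 1 := by omega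
      have hbb := H.bt2 hmb
      rw [H.val_lo cb1] at h2
      by_cases hw2 : j + n + 1 + t2 (b + n - j - 1) < 2*n
      · rw [wrap_lo hw2] at h2
        refine H.ht2.2.2.2 (t2 (b + n - j - 1)) (a + n - j - 1) (by omega) ?_ ?_
        · rw [H.ht2.1]
          omega
        · rw [H.ht2.1]
          omega
      · rw [wrap_hi hw2] at h2
        exact H.ht2.2.2.2 (a + n - j - 1) (b + n - j - 1) (by omega) (by omega) (by omega)
  by_cases ca2 : a < j
  · exfalso
    have hba := H.bt1 (show a - i - 1 < j - i - 1 by omega)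
    rw [H.val_A1 (by omega) ca2] at h1 h2
    have hbb := H.bt1 (show b - i - 1 < j - i - 1 by omega)
    rw [H.val_A1 (by omega) (by omega : b < j)] at h2
    exact H.ht1.2.2.2 (a - i - 1) (b - i - 1) (by omega) (by omega) (by omega)
  by_cases ca3 : a < i + n
  · exfalso
    have hba := H.bt2 (show a - j - 1 < n + i - j - 1 by omega)
    rw [H.val_A2 (by omega) ca3] at h1 h2
    have hbb := H.bt2 (show b - j - 1 < n + i - j - 1 by omega)
    rw [H.val_A2 (by omega) (by omega : b < i + n)] at h2
    exact H.ht2.2.2.2 (a - j - 1) (b - j - 1) (by omega) (by omega) (by omega)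
  by_cases ca4 : a < j + n
  · exfalso
    have hba := H.bt1 (show a - i - n - 1 < j - i - 1 by omega)
    rw [H.val_A3 (by omega) ca4] at h1 h2
    have hbb := H.bt1 (show b - i - n - 1 < j - i - 1 by omega)
    rw [H.val_A3 (by omega) (by omega : b < j + n)] at h2
    exact H.ht1.2.2.2 (a - i - n - 1) (b - i - n - 1) (by omega) (by omega) (by omega)
  · exfalso
    have hma : a - n - j - 1 < n + i - j - 1 := by omega
    have hba := H.bt2 hma
    rw [H.val_hi (k := a) (by omega)] at h1 h2
    by_cases hw : j + n + 1 + t2 (a - n - j - 1) < 2*n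
    · rw [wrap_lo hw] at h1 h2
      have hmb : b - n - j - 1 < n + i - j - 1 := by omega
      have hbb := H.bt2 hmb
      rw [H.val_hi (k := b) (by omega)] at h2
      by_cases hw2 : j + n + 1 + t2 (b - n - j - 1) < 2*n
      · rw [wrap_lo hw2] at h2
        exact H.ht2.2.2.2 (a - n - j - 1) (b - n - j - 1) (by omega) (by omega) (by omega)
      · rw [wrap_hi hw2] at h2
        omega
    · rw [wrap_hi hw] at h1
      omega

end BCtx

/-! ### ZMod layer -/

lemma mod_eq_wrap {M a : ℕ} (hM : 0 < M) (h : a < 2*M) : a % M = wrap M a := by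
  by_cases h1 : a < M
  · rw [Nat.mod_eq_of_lt h1, wrap_lo h1]
  · rw [wrap_hi h1, Nat.mod_eq_sub_mod (by omega), Nat.mod_eq_of_lt (by omega)]

lemma cast_wrap {n : ℕ} (a : ℕ) : ((wrap (2*n) a : ℕ) : ZMod (2*n)) = (a : ZMod (2*n)) := by
  unfold wrap
  split
  · rfl
  · rename_i h
    rw [Nat.cast_sub (by omega), ZMod.natCast_self, sub_zero]

lemma val_add_n {n : ℕ} [NeZero (2*n)] (x : ZMod (2*n)) :
    (x + (n : ZMod (2*n))).val = wrap (2*n) (x.val + n) := by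
  have h2n : 0 < 2*n := Nat.pos_of_ne_zero (NeZero.ne _)
  have hv := ZMod.val_lt x
  rw [ZMod.val_add, ZMod.val_cast_of_lt (by omega), mod_eq_wrap (by omega) (by omega)]

/-- index data: a pair `i < j < n`. -/
def QIdx (n : ℕ) : Type := {q : ℕ × ℕ // q.1 < q.2 ∧ q.2 < n}

instance QIdx.finite (n : ℕ) : Finite (QIdx n) := by
  apply Finite.of_injective
    (fun q : QIdx n => ((⟨q.1.1, by have := q.2; omega⟩, ⟨q.1.2, q.2.2⟩) : Fin n × Fin n))
  intro q q' h
  apply Subtype.ext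
  have h1 := congrArg (fun p : Fin n × Fin n => (p.1 : ℕ)) h
  have h2 := congrArg (fun p : Fin n × Fin n => (p.2 : ℕ)) h
  simp only at h1 h2
  exact Prod.ext h1 h2

def TData (n : ℕ) : Type :=
  Σ q : QIdx n, NC (q.1.2 - q.1.1 - 1) × NC (n + q.1.1 - q.1.2 - 1)

instance TData.finite (n : ℕ) : Finite (TData n) := by
  unfold TData
  infer_instance

def brauerOf (n : ℕ) (q : TData n) : ZMod (2*n) → ZMod (2*n) :=
  fun x => ((FB n q.1.1.1 q.1.1.2 q.2.1.1 q.2.2.1 x.val : ℕ) : ZMod (2*n))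

lemma TData.bctx {n : ℕ} (hn : 2 ≤ n) (q : TData n) :
    BCtx n q.1.1.1 q.1.1.2 q.2.1.1 q.2.2.1 :=
  ⟨hn, q.1.2.1, q.1.2.2, q.2.1.2, q.2.2.2⟩

lemma brauerOf_mem (n : ℕ) (hn : 2 ≤ n) (q : TData n) :
    IsCrossTwoBrauer n (brauerOf n q) := by
  haveI : NeZero (2*n) := ⟨by omega⟩
  obtain ⟨⟨⟨i, j⟩, hq⟩, t1, t2⟩ := q
  have H : BCtx n i j t1.1 t2.1 := ⟨hn, hq.1, hq.2, t1.2, t2.2⟩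
  have hval : ∀ x : ZMod (2*n),
      (brauerOf n ⟨⟨⟨i, j⟩, hq⟩, t1, t2⟩ x).val = FB n i j t1.1 t2.1 x.val := fun x =>
    ZMod.val_cast_of_lt (H.FB_lt (ZMod.val_lt x))
  refine ⟨?_, ?_, ?_⟩
  · intro x
    show ((FB n i j t1.1 t2.1 (brauerOf n ⟨⟨⟨i, j⟩, hq⟩, t1, t2⟩ x).val : ℕ) : ZMod (2*n)) = x
    rw [hval, H.FB_invol (ZMod.val_lt x)]
    exact ZMod.natCast_rightInverse x
  · intro x
    show ((FB n i j t1.1 t2.1 ((x + (n:ZMod (2*n))).val) : ℕ) : ZMod (2*n))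
      = ((FB n i j t1.1 t2.1 x.val : ℕ) : ZMod (2*n)) + (n : ZMod (2*n))
    rw [val_add_n x, H.FB_symm (ZMod.val_lt x), cast_wrap, Nat.cast_add]
  · have hij := hq.1
    have hjn := hq.2
    have vi : ((i : ZMod (2*n))).val = i := ZMod.val_cast_of_lt (by omega)
    have vj : ((j : ZMod (2*n))).val = j := ZMod.val_cast_of_lt (by omega)
    refine ⟨((i : ZMod (2*n)), (j : ZMod (2*n))), ⟨?_, ?_, ?_⟩, ?_⟩
    · simp only [vi, vj]; omega
    · show ((j:ZMod (2*n))).val < (brauerOf n ⟨⟨⟨i, j⟩, hq⟩, t1, t2⟩ (i:ZMod (2*n))).val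
      rw [hval, vi, vj, BCtx.val_i]
      omega
    · show (brauerOf n ⟨⟨⟨i, j⟩, hq⟩, t1, t2⟩ (i:ZMod (2*n))).val
        < (brauerOf n ⟨⟨⟨i, j⟩, hq⟩, t1, t2⟩ (j:ZMod (2*n))).val
      rw [hval, hval, vi, vj, BCtx.val_i, H.val_j]
      omega
    · rintro ⟨x, y⟩ ⟨u1, u2, u3⟩
      rw [hval] at u2 u3
      rw [hval] at u3
      have := H.FB_unique (ZMod.val_lt x) (ZMod.val_lt y) u1 u2 u3
      have hx : x = (i : ZMod (2*n)) := by
        rw [← ZMod.natCast_rightInverse x, this.1]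
      have hy : y = (j : ZMod (2*n)) := by
        rw [← ZMod.natCast_rightInverse y, this.2]
      rw [hx, hy]

lemma brauerOf_inj (n : ℕ) (hn : 2 ≤ n) : Function.Injective (brauerOf n) := by
  haveI : NeZero (2*n) := ⟨by omega⟩
  rintro ⟨⟨⟨i, j⟩, hq⟩, t1, t2⟩ ⟨⟨⟨i', j'⟩, hq'⟩, t1', t2'⟩ h
  have H : BCtx n i j t1.1 t2.1 := ⟨hn, hq.1, hq.2, t1.2, t2.2⟩
  have H' : BCtx n i' j' t1'.1 t2'.1 := ⟨hn, hq'.1, hq'.2, t1'.2, t2'.2⟩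
  have hFB : ∀ k, k < 2*n → FB n i j t1.1 t2.1 k = FB n i' j' t1'.1 t2'.1 k := by
    intro k hk
    have hkv : ((k : ZMod (2*n))).val = k := ZMod.val_cast_of_lt hk
    have h2 := congrArg ZMod.val (congrFun h ((k : ℕ) : ZMod (2*n)))
    have e1 : (brauerOf n ⟨⟨⟨i, j⟩, hq⟩, t1, t2⟩ ((k : ℕ) : ZMod (2*n))).val
        = FB n i j t1.1 t2.1 k := by
      show ((FB n i j t1.1 t2.1 (((k:ℕ) : ZMod (2*n)).val) : ℕ) : ZMod (2*n)).val = _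
      rw [hkv]
      exact ZMod.val_cast_of_lt (H.FB_lt hk)
    have e2 : (brauerOf n ⟨⟨⟨i', j'⟩, hq'⟩, t1', t2'⟩ ((k : ℕ) : ZMod (2*n)) ).val
        = FB n i' j' t1'.1 t2'.1 k := by
      show ((FB n i' j' t1'.1 t2'.1 (((k:ℕ) : ZMod (2*n)).val) : ℕ) : ZMod (2*n)).val = _
      rw [hkv]
      exact ZMod.val_cast_of_lt (H'.FB_lt hk)
    rw [← e1, ← e2, h2]
  have hij : i = i' ∧ j = j' := by
    have e1 : FB n i' j' t1'.1 t2'.1 i = i + n := by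
      rw [← hFB i (by have := hq.1; have := hq.2; omega), BCtx.val_i]
    have e2 : FB n i' j' t1'.1 t2'.1 j = j + n := by
      rw [← hFB j (by have := hq.2; omega), H.val_j]
    have := H'.FB_unique (a := i) (b := j)
      (by have := hq.1; have := hq.2; omega) (by have := hq.2; omega) hq.1
      (by rw [e1]; have := hq.2; omega) (by rw [e1, e2]; have := hq.1; omega)
    exact this
  obtain ⟨rfl, rfl⟩ := hij
  have ht1 : t1 = t1' := by
    apply NC.ext
    intro a ha
    have ha' : a < j - i - 1 := ha
    have h1 := hFB (i + 1 + a) (by have := hq.2; omega)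
    rw [H.val_A1 (by omega) (by omega), H'.val_A1 (by omega) (by omega)] at h1
    rw [show i + 1 + a - i - 1 = a by omega] at h1
    omega
  have ht2 : t2 = t2' := by
    apply NC.ext
    intro a ha
    have ha' : a < n + i - j - 1 := ha
    have h1 := hFB (j + 1 + a) (by have := hq.1; have := hq.2; omega)
    rw [H.val_A2 (by omega) (by omega), H'.val_A2 (by omega) (by omega)] at h1
    rw [show j + 1 + a - j - 1 = a by omega] at h1
    omega
  rw [ht1, ht2]

lemma brauerOf_surj (n : ℕ) (hn : 2 ≤ n) {σ : ZMod (2*n) → ZMod (2*n)}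
    (hσ : IsCrossTwoBrauer n σ) : ∃ q : TData n, brauerOf n q = σ := by
  haveI : NeZero (2*n) := ⟨by omega⟩
  obtain ⟨hinv, hsym, ⟨p, hp, hup⟩⟩ := hσ
  set g : ℕ → ℕ := fun k => (σ ((k : ℕ) : ZMod (2*n))).val with hgdef
  have glt : ∀ k, g k < 2*n := fun k => ZMod.val_lt _
  have gv : ∀ x : ZMod (2*n), (σ x).val = g x.val := by
    intro x
    show _ = (σ ((x.val : ℕ) : ZMod (2*n))).val
    rw [ZMod.natCast_rightInverse x]
  have ginv : ∀ k, k < 2*n → g (g k) = k := by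
    intro k hk
    show (σ ((((σ ((k:ℕ) : ZMod (2*n))).val : ℕ)) : ZMod (2*n))).val = k
    rw [ZMod.natCast_rightInverse (σ ((k:ℕ) : ZMod (2*n))), hinv ((k:ℕ) : ZMod (2*n)),
      ZMod.val_cast_of_lt hk]
  have gsym : ∀ k, k < 2*n → g (wrap (2*n) (k + n)) = wrap (2*n) (g k + n) := by
    intro k hk
    show (σ ((wrap (2*n) (k+n) : ℕ) : ZMod (2*n))).val = _
    rw [cast_wrap, Nat.cast_add, hsym ((k:ℕ) : ZMod (2*n)), val_add_n]
  set A := p.1.val with hA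
  set B := p.2.val with hB
  have hA2 : A < 2*n := ZMod.val_lt _
  have hB2 : B < 2*n := ZMod.val_lt _
  have hpat : A < B ∧ B < g A ∧ g A < g B := by
    obtain ⟨u1, u2, u3⟩ := hp
    rw [gv] at u2 u3
    rw [gv] at u3
    exact ⟨u1, u2, u3⟩
  have huniq : ∀ a b, a < 2*n → b < 2*n → a < b → b < g a → g a < g b → a = A ∧ b = B := by
    intro a b h2a h2b hab hb1 hb2
    have hva : ((a : ZMod (2*n))).val = a := ZMod.val_cast_of_lt h2a
    have hvb : ((b : ZMod (2*n))).val = b := ZMod.val_cast_of_lt h2b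
    have := hup ((a : ZMod (2*n)), (b : ZMod (2*n)))
      ⟨by rw [hva, hvb]; exact hab, by rw [hvb]; exact hb1, hb2⟩
    constructor
    · rw [hA, ← this, hva]
    · rw [hB, ← this, hvb]
  obtain ⟨hAB, hBgA, hgAgB⟩ := hpat
  have hgA2 : g A < 2*n := glt A
  have hgB2 : g B < 2*n := glt B
  -- the crossing consists of two diameters
  have key : A < n ∧ B < n ∧ g A = A + n ∧ g B = B + n := by
    have hgAA : g (g A) = A := ginv A hA2
    have hgBB : g (g B) = B := ginv B hB2
    by_cases c1 : g B < n
    · exfalso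
      have e1 : g (A + n) = g A + n := by
        have := gsym A hA2
        rwa [wrap_lo (by omega), wrap_lo (by omega)] at this
      have e2 : g (B + n) = g B + n := by
        have := gsym B hB2
        rwa [wrap_lo (by omega), wrap_lo (by omega)] at this
      have := huniq (A + n) (B + n) (by omega) (by omega) (by omega)
        (by rw [e1]; omega) (by rw [e1, e2]; omega)
      omega
    by_cases c2 : g A < n
    · exfalso
      have e1 : g (A + n) = g A + n := by
        have := gsym A hA2
        rwa [wrap_lo (by omega), wrap_lo (by omega)] at this
      have e2 : g (g B - n) = B + n := by
        have := gsym (g B) hgB2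
        rwa [wrap_hi (by omega), wrap_lo (by omega), hgBB,
          show g B + n - 2*n = g B - n by omega] at this
      have := huniq (g B - n) (A + n) (by omega) (by omega) (by omega)
        (by rw [e2]; omega) (by rw [e2, e1]; omega)
      omega
    by_cases c3 : B < n
    · have e1 : g (g A - n) = A + n := by
        have := gsym (g A) hgA2
        rwa [wrap_hi (by omega), wrap_lo (by omega), hgAA,
          show g A + n - 2*n = g A - n by omega] at this
      have e2 : g (g B - n) = B + n := by
        have := gsym (g B) hgB2
        rwa [wrap_hi (by omega), wrap_lo (by omega), hgBB,
          show g B + n - 2*n = g B - n by omega] at this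
      have := huniq (g A - n) (g B - n) (by omega) (by omega) (by omega)
        (by rw [e1]; omega) (by rw [e1, e2]; omega)
      exact ⟨by omega, c3, by omega, by omega⟩
    by_cases c4 : A < n
    · exfalso
      have e1 : g (B - n) = g B - n := by
        have := gsym B hB2
        rw [wrap_hi (by omega), show B + n - 2*n = B - n by omega,
          wrap_hi (by omega)] at this
        omega
      have e2 : g (g A - n) = A + n := by
        have := gsym (g A) hgA2
        rwa [wrap_hi (by omega), wrap_lo (by omega), hgAA,
          show g A + n - 2*n = g A - n by omega] at this
      have := huniq (B - n) (g A - n) (by omega) (by omega) (by omega)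
        (by rw [e1]; omega) (by rw [e1, e2]; omega)
      omega
    · exfalso
      have e1 : g (A - n) = g A - n := by
        have := gsym A hA2
        rw [wrap_hi (by omega), show A + n - 2*n = A - n by omega,
          wrap_hi (by omega)] at this
        omega
      have e2 : g (B - n) = g B - n := by
        have := gsym B hB2
        rw [wrap_hi (by omega), show B + n - 2*n = B - n by omega,
          wrap_hi (by omega)] at this
        omega
      have := huniq (A - n) (B - n) (by omega) (by omega) (by omega)
        (by rw [e1]; omega) (by rw [e1, e2]; omega)
      omega
  obtain ⟨hAn, hBn, hgA, hgB⟩ := key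
  have hgAB : g (A + n) = A := by rw [← hgA, ginv A hA2]
  have hgBB : g (B + n) = B := by rw [← hgB, ginv B hB2]
  have cl1 : ∀ k, A < k → k < B → A < g k ∧ g k < B := by
    intro k hk1 hk2
    have hk2n : k < 2*n := by omega
    have hgk := glt k
    have hgik : g k ≠ A + n := by
      intro e
      have h0 := ginv k hk2n
      rw [e, hgAB] at h0
      omega
    have hgjk : g k ≠ B + n := by
      intro e
      have h0 := ginv k hk2n
      rw [e, hgBB] at h0
      omega
    have hgA' : g k ≠ A := by
      intro e
      have h0 := ginv k hk2n
      rw [e, hgA] at h0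
      omega
    have hgB' : g k ≠ B := by
      intro e
      have h0 := ginv k hk2n
      rw [e, hgB] at h0
      omega
    by_cases w1 : g k < A
    · exfalso
      have := huniq (g k) A (glt k) hA2 (by omega) (by rw [ginv k hk2n]; omega)
        (by rw [ginv k hk2n, hgA]; omega)
      omega
    by_cases w2 : g k < B
    · exact ⟨by omega, w2⟩
    by_cases w3 : g k < A + n
    · exfalso
      have := huniq k B hk2n hB2 hk2 (by omega) (by rw [hgB]; omega)
      omega
    · exfalso
      have := huniq A k hA2 hk2n (by omega) (by rw [hgA]; omega) (by rw [hgA]; omega)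
      omega
  have cl2 : ∀ k, B < k → k < A + n → B < g k ∧ g k < A + n := by
    intro k hk1 hk2
    have hk2n : k < 2*n := by omega
    have hgk := glt k
    have hgik : g k ≠ A + n := by
      intro e
      have h0 := ginv k hk2n
      rw [e, hgAB] at h0
      omega
    have hgjk : g k ≠ B + n := by
      intro e
      have h0 := ginv k hk2n
      rw [e, hgBB] at h0
      omega
    have hgA' : g k ≠ A := by
      intro e
      have h0 := ginv k hk2n
      rw [e, hgA] at h0
      omega
    have hgB' : g k ≠ B := by
      intro e
      have h0 := ginv k hk2n
      rw [e, hgB] at h0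
      omega
    by_cases w1 : g k < B
    · exfalso
      have := huniq (g k) B (glt k) hB2 (by omega) (by rw [ginv k hk2n]; omega)
        (by rw [ginv k hk2n, hgB]; omega)
      omega
    by_cases w2 : g k < A + n
    · exact ⟨by omega, w2⟩
    by_cases w3 : g k < B + n
    · exfalso
      have := huniq A k hA2 hk2n (by omega) (by rw [hgA]; omega) (by rw [hgA]; omega)
      omega
    · exfalso
      have := huniq B k hB2 hk2n (by omega) (by rw [hgB]; omega) (by rw [hgB]; omega)
      omega
  have nc1 : IsNC (B - A - 1) (slc (A+1) (B-A-1) g) := by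
    apply isNC_slice (A+1) (B-A-1)
    · intro a h1 h2
      exact ginv a (by omega)
    · intro a b h1 h2 h3 h4 hab hh1 hh2
      have := huniq a b (by omega) (by omega) hab hh1 hh2
      omega
    · intro a h1 h2
      have := cl1 a (by omega) (by omega)
      omega
  have nc2 : IsNC (n + A - B - 1) (slc (B+1) (n + A - B - 1) g) := by
    apply isNC_slice (B+1) (n + A - B - 1)
    · intro a h1 h2
      exact ginv a (by omega)
    · intro a b h1 h2 h3 h4 hab hh1 hh2
      have := huniq a b (by omega) (by omega) hab hh1 hh2
      omega
    · intro a h1 h2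
      have := cl2 a (by omega) (by omega)
      omega
  refine ⟨⟨⟨(A, B), ⟨hAB, hBn⟩⟩, ⟨slc (A+1) (B-A-1) g, nc1⟩, ⟨slc (B+1) (n+A-B-1) g, nc2⟩⟩, ?_⟩
  have H : BCtx n A B (slc (A+1) (B-A-1) g) (slc (B+1) (n+A-B-1) g) := ⟨hn, hAB, hBn, nc1, nc2⟩
  have hFBg : ∀ k, k < 2*n → FB n A B (slc (A+1) (B-A-1) g) (slc (B+1) (n+A-B-1) g) k = g k := by
    intro k hk
    by_cases e1 : k = A
    · rw [e1, BCtx.val_i, hgA]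
    by_cases e2 : k = B
    · rw [e2, H.val_j, hgB]
    by_cases e3 : k = A + n
    · rw [e3, H.val_in, hgAB]
    by_cases e4 : k = B + n
    · rw [e4, H.val_jn, hgBB]
    by_cases c1 : k < A
    · rw [H.val_lo c1, slice_lt _ _ _ _ (by omega : k + n - B - 1 < n + A - B - 1)]
      have hcl := cl2 (k + n) (by omega) (by omega)
      rw [show k + n - B - 1 + (B+1) = k + n by omega]
      have hrot := gsym k (by omega)
      rw [wrap_lo (by omega : k + n < 2*n)] at hrot
      rw [show B + n + 1 + (g (k+n) - (B+1)) = g (k + n) + n by omega, hrot]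
      have hgk := glt k
      by_cases hw : g k + n < 2*n
      · rw [wrap_lo hw, wrap_hi (by omega)]
        omega
      · rw [wrap_hi hw, wrap_lo (by omega)]
        omega
    by_cases c2 : k < B
    · rw [H.val_A1 (by omega) c2, slice_lt _ _ _ _ (by omega : k - A - 1 < B - A - 1)]
      have hcl := cl1 k (by omega) c2
      rw [show k - A - 1 + (A+1) = k by omega]
      omega
    by_cases c3 : k < A + n
    · rw [H.val_A2 (by omega) c3, slice_lt _ _ _ _ (by omega : k - B - 1 < n + A - B - 1)]
      have hcl := cl2 k (by omega) c3
      rw [show k - B - 1 + (B+1) = k by omega]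
      omega
    by_cases c4 : k < B + n
    · rw [H.val_A3 (by omega) c4, slice_lt _ _ _ _ (by omega : k - A - n - 1 < B - A - 1)]
      have hcl := cl1 (k - n) (by omega) (by omega)
      rw [show k - A - n - 1 + (A+1) = k - n by omega]
      have hrot := gsym (k - n) (by omega)
      rw [wrap_lo (by omega : k - n + n < 2*n), show k - n + n = k by omega,
        wrap_lo (by omega : g (k - n) + n < 2*n)] at hrot
      omega
    · rw [H.val_hi (by omega), slice_lt _ _ _ _ (by omega : k - n - B - 1 < n + A - B - 1)]
      have hcl := cl2 (k - n) (by omega) (by omega)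
      rw [show k - n - B - 1 + (B+1) = k - n by omega]
      have hrot := gsym (k - n) (by omega)
      rw [wrap_lo (by omega : k - n + n < 2*n), show k - n + n = k by omega] at hrot
      rw [show B + n + 1 + (g (k - n) - (B+1)) = g (k - n) + n by omega, ← hrot]
  funext x
  show ((FB n A B (slc (A+1) (B-A-1) g) (slc (B+1) (n+A-B-1) g) x.val : ℕ) : ZMod (2*n)) = σ x
  rw [hFBg x.val (ZMod.val_lt x)]
  show ((((σ ((x.val : ℕ) : ZMod (2*n))).val : ℕ)) : ZMod (2*n)) = σ x
  rw [ZMod.natCast_rightInverse x, ZMod.natCast_rightInverse (σ x)]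

lemma sigma_nat_ext {x y : Σ _ : ℕ, ℕ} (h1 : x.1 = y.1) (h2 : x.2 = y.2) : x = y := by
  cases x
  cases y
  simp only at h1 h2
  subst h1
  subst h2
  rfl

/-- Proposition 8.2: for every `n ≥ 2`, the set of crossing `2`-Brauer relations
of rank `2n` is finite and its cardinality equals
`∑_{i=1}^{n-1} ∑_{j=i+1}^{n} M (j-i-1) * M (n+i-j-1)`. -/
theorem card_crossTwoBrauer (n : ℕ) (hn : 2 ≤ n) :
    {σ : ZMod (2 * n) → ZMod (2 * n) | IsCrossTwoBrauer n σ}.Finite ∧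
      {σ : ZMod (2 * n) → ZMod (2 * n) | IsCrossTwoBrauer n σ}.ncard =
        ∑ i ∈ Finset.Icc 1 (n - 1), ∑ j ∈ Finset.Icc (i + 1) n,
          motzkin (j - i - 1) * motzkin (n + i - j - 1) := by
  haveI : NeZero (2 * n) := ⟨by omega⟩
  refine ⟨Set.toFinite _, ?_⟩
  have hbij : Function.Bijective (fun q : TData n =>
      (⟨brauerOf n q, brauerOf_mem n hn q⟩ :
        {σ : ZMod (2 * n) → ZMod (2 * n) | IsCrossTwoBrauer n σ})) := by
    constructor
    · intro q q' h
      exact brauerOf_inj n hn (congrArg Subtype.val h)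
    · rintro ⟨σ, hσ⟩
      obtain ⟨q, hq⟩ := brauerOf_surj n hn hσ
      exact ⟨q, Subtype.ext hq⟩
  rw [← Nat.card_coe_set_eq, Nat.card_congr (Equiv.ofBijective _ hbij).symm]
  haveI : Fintype (QIdx n) := Fintype.ofFinite _
  have hTcard : Nat.card (TData n)
      = ∑ q : QIdx n, motzkin (q.1.2 - q.1.1 - 1) * motzkin (n + q.1.1 - q.1.2 - 1) := by
    rw [show (TData n)
      = Σ q : QIdx n, NC (q.1.2 - q.1.1 - 1) × NC (n + q.1.1 - q.1.2 - 1) from rfl]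
    rw [Nat.card_eq_fintype_card, Fintype.card_sigma]
    apply Finset.sum_congr rfl
    intro q _
    rw [Fintype.card_prod, ← Nat.card_eq_fintype_card, ← Nat.card_eq_fintype_card,
      card_NC, card_NC]
  rw [hTcard]
  rw [← Finset.sum_sigma (Finset.Icc 1 (n - 1)) (fun i => Finset.Icc (i + 1) n)
    (fun x => motzkin (x.2 - x.1 - 1) * motzkin (n + x.1 - x.2 - 1))]
  refine Finset.sum_bij' (fun q _ => (⟨q.1.1 + 1, q.1.2 + 1⟩ : Σ _ : ℕ, ℕ))
    (fun x hx => (⟨(x.1 - 1, x.2 - 1), ?_⟩ : QIdx n)) ?_ ?_ ?_ ?_ ?_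
  · have hx' := Finset.mem_sigma.mp hx
    have h1 := Finset.mem_Icc.mp hx'.1
    have h2 := Finset.mem_Icc.mp hx'.2
    constructor
    · omega
    · omega
  · intro q _
    have hq := q.2
    refine Finset.mem_sigma.mpr ⟨Finset.mem_Icc.mpr ?_, Finset.mem_Icc.mpr ?_⟩
    · show 1 ≤ q.1.1 + 1 ∧ q.1.1 + 1 ≤ n - 1
      omega
    · show q.1.1 + 1 + 1 ≤ q.1.2 + 1 ∧ q.1.2 + 1 ≤ n
      omega
  · intro x hx
    exact Finset.mem_univ _
  · intro q _
    apply Subtype.ext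
    have hq := q.2
    apply Prod.ext
    · show q.1.1 + 1 - 1 = q.1.1
      omega
    · show q.1.2 + 1 - 1 = q.1.2
      omega
  · intro x hx
    have hx' := Finset.mem_sigma.mp hx
    have h1 := Finset.mem_Icc.mp hx'.1
    have h2 := Finset.mem_Icc.mp hx'.2
    apply sigma_nat_ext
    · show x.1 - 1 + 1 = x.1
      omega
    · show x.2 - 1 + 1 = x.2
      omega
  · intro q _
    show motzkin (q.1.2 - q.1.1 - 1) * motzkin (n + q.1.1 - q.1.2 - 1)
      = motzkin (q.1.2 + 1 - (q.1.1 + 1) - 1) * motzkin (n + (q.1.1 + 1) - (q.1.2 + 1) - 1)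
    rw [show q.1.2 + 1 - (q.1.1 + 1) - 1 = q.1.2 - q.1.1 - 1 by omega,
      show n + (q.1.1 + 1) - (q.1.2 + 1) - 1 = n + q.1.1 - q.1.2 - 1 by omega]
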